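/- Let 2 ≤ n ≤ N−1 and assume the step ratios satisfy 0 < r_k < (3+√17)/2 for 2 ≤ k ≤ N. Then the DOC kernels are positive definite: for any real numbers w_1, …, w_n, not all zero, one has Σ_{k=1}^{n} w_k Σ_{j=1}^{k} θ_{k−j}^{(k)} w_j > 0. -/

import Mathlib

open Finset

/-- BDF2 kernels `b_j^{(n)}` (assuming `r 1 = 0`, so the `n = 1` case
`b_0^{(1)} = 1/τ_1` is subsumed by the general formula). -/
noncomputable def bk (τ r : ℕ → ℝ) (n j : ℕ) : ℝ :=
  if j = 0 then (1 + 2 * r n) / (τ n * (1 + r n))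
  else if j = 1 then -(r n) ^ 2 / (τ n * (1 + r n))
  else 0

/-- DOC kernels: `th τ r n m = θ_m^{(n)}`, i.e. `θ_{n-k}^{(n)}` with `m = n - k`. -/
noncomputable def th (τ r : ℕ → ℝ) (n : ℕ) : ℕ → ℝ
  | 0 => 1 / bk τ r n 0
  | m + 1 => -(1 / bk τ r (n - (m + 1)) 0) *
      ∑ i ∈ (Finset.range (m + 1)).attach,
        th τ r n i.1 * bk τ r (n - i.1) (m + 1 - i.1)
  decreasing_by exact Finset.mem_range.mp i.2

/-!
The BDF2 kernel matrix `B = (b^{(n)}_{n-k})` is lower bidiagonal and the DOC kernels are the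
entries of `B⁻¹`. Hence, with `v_k = ∑_{j ≤ k} θ^{(k)}_{k-j} w_j`, one has
`w_k = b^{(k)}_0 v_k + b^{(k)}_1 v_{k-1}`, and the quadratic form equals
`∑_k (b^{(k)}_0 v_k + b^{(k)}_1 v_{k-1}) v_k`. Because `b^{(k)}_1 ≤ 0`, the bound
`2 v_k v_{k-1} ≤ v_k² + v_{k-1}²` shows that twice this form is at least
`∑_k (2 b^{(k)}_0 + b^{(k)}_1 + b^{(k+1)}_1) v_k²`, and these coefficients are positive precisely
under the step-ratio restriction. The last one involves `r_{n+1}`, which is why `n ≤ N - 1`.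
-/

lemma bidiagonal_form_pos (a c v : ℕ → ℝ) (n : ℕ) (hc : ∀ k ∈ Icc 1 (n + 1), c k ≤ 0)
    (hD : ∀ k ∈ Icc 1 n, 0 < 2 * a k + c k + c (k + 1)) (hv0 : v 0 = 0)
    (hv : ∃ k ∈ Icc 1 n, v k ≠ 0) :
    0 < ∑ k ∈ Icc 1 n, (a k * v k + c k * v (k - 1)) * v k := by
  obtain ⟨k₀, hk₀, hvk₀⟩ := hv
  set g : ℕ → ℝ := fun k => c k * v (k - 1) ^ 2 with hg
  have hpoint : ∀ k ∈ Icc 1 n, (2 * a k + c k + c (k + 1)) * v k ^ 2 + (g k - g (k + 1))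
      ≤ 2 * ((a k * v k + c k * v (k - 1)) * v k) := by
    intro k hk
    simp only [hg, Nat.add_sub_cancel]
    nlinarith [mul_nonpos_of_nonpos_of_nonneg (hc k (by grind)) (sq_nonneg (v k - v (k - 1)))]
  have htel : ∑ k ∈ Icc 1 n, (g k - g (k + 1)) = g 1 - g (n + 1) := by
    rw [← neg_sub, ← sum_Icc_sub (by grind), ← sum_neg_distrib]
    simp
  have hg1 : g 1 = 0 := by simp [hg, hv0]
  have hgn : g (n + 1) ≤ 0 := mul_nonpos_of_nonpos_of_nonneg (hc (n + 1) (by simp)) (sq_nonneg _)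
  have hdiag : 0 < ∑ k ∈ Icc 1 n, (2 * a k + c k + c (k + 1)) * v k ^ 2 :=
    sum_pos' (fun k hk => mul_nonneg (hD k hk).le (sq_nonneg _))
      ⟨k₀, hk₀, mul_pos (hD k₀ hk₀) (by positivity)⟩
  have := sum_le_sum hpoint
  rw [sum_add_distrib, htel, ← mul_sum] at this
  linarith

/-- `(3 + √17) / 2` is the positive root `ρ` of `ρ² = 3ρ + 2`, where the concave function
`(2 + 4s - s²) / (1 + s)` falls to `ρ / (1 + ρ)`, the supremum of `t / (1 + t)` over `t < ρ`. -/
lemma mul_one_add_lt_of_lt_three_add_sqrt_seventeen_div_two {s t : ℝ} (hs0 : 0 ≤ s)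
    (hs : s < (3 + √17) / 2) (ht0 : 0 ≤ t) (ht : t < (3 + √17) / 2) :
    t * (1 + s) < (2 + 4 * s - s ^ 2) * (1 + t) := by
  set ρ := (3 + √17) / 2
  have hρ : ρ ^ 2 = 3 * ρ + 2 := by
    have := Real.sq_sqrt (show (0 : ℝ) ≤ 17 by norm_num)
    linear_combination this / 4
  have hρ0 : 0 < ρ := by positivity
  have key : ρ * (1 + ρ) * ((2 + 4 * s - s ^ 2) * (1 + t) - t * (1 + s))
      = (1 + t) * (ρ - s) * (ρ * (1 + ρ) * s + (2 + ρ)) + ρ * (1 + s) * (ρ - t) := by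
    linear_combination (-(1 + t) * s * (ρ + 1)) * hρ
  have hpos : 0 < ρ * (1 + ρ) * ((2 + 4 * s - s ^ 2) * (1 + t) - t * (1 + s)) := by
    rw [key]
    have := mul_pos (mul_pos (by linarith : 0 < 1 + t) (sub_pos.2 hs))
      (by positivity : 0 < ρ * (1 + ρ) * s + (2 + ρ))
    have := mul_pos (mul_pos hρ0 (by linarith : 0 < 1 + s)) (sub_pos.2 ht)
    linarith
  have := (pos_iff_pos_of_mul_pos hpos).1 (by positivity)
  linarith

section Kernels

variable (τ r : ℕ → ℝ)

lemma bk_zero (n : ℕ) : bk τ r n 0 = (1 + 2 * r n) / (τ n * (1 + r n)) := by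
  simp [bk]

lemma bk_one (n : ℕ) : bk τ r n 1 = -r n ^ 2 / (τ n * (1 + r n)) := by
  simp [bk]

lemma bk_of_two_le {n j : ℕ} (hj : 2 ≤ j) : bk τ r n j = 0 := by
  simp [bk, show j ≠ 0 by omega, show j ≠ 1 by omega]

lemma th_zero (n : ℕ) : th τ r n 0 = 1 / bk τ r n 0 := by
  rw [th]

lemma th_succ (n m : ℕ) :
    th τ r n (m + 1) = -(1 / bk τ r (n - (m + 1)) 0) * (th τ r n m * bk τ r (n - m) 1) := by
  rw [th, sum_attach (range (m + 1)) fun i => th τ r n i * bk τ r (n - i) (m + 1 - i),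
    sum_eq_single_of_mem m (self_mem_range_succ m) fun i hi him => ?_, Nat.add_sub_cancel_left]
  rw [bk_of_two_le τ r (by grind), mul_zero]

variable {τ r}

/-- The recursion defining `th` says `Θ B = I`; this is the row form `B Θ = I`. -/
lemma bk_zero_mul_th_succ {k : ℕ} (hk : bk τ r k 0 ≠ 0) (m : ℕ) :
    bk τ r k 0 * th τ r k (m + 1) = -(bk τ r k 1 * th τ r (k - 1) m) := by
  induction m with
  | zero =>
    rw [th_succ, th_zero, th_zero, Nat.sub_zero, zero_add]
    field_simp
  | succ m ih =>
    rw [th_succ, th_succ τ r (k - 1), Nat.sub_sub, Nat.sub_sub, add_comm 1 m, add_comm 1 (m + 1)]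
    linear_combination (-(1 / bk τ r (k - (m + 1 + 1)) 0) * bk τ r (k - (m + 1)) 1) * ih

noncomputable def docConv (τ r w : ℕ → ℝ) (k : ℕ) : ℝ :=
  ∑ j ∈ Icc 1 k, th τ r k (k - j) * w j

lemma docConv_zero (w : ℕ → ℝ) : docConv τ r w 0 = 0 := by
  simp [docConv]

lemma bk_mul_docConv_add (w : ℕ → ℝ) {k : ℕ} (hk : 1 ≤ k) (hb : bk τ r k 0 ≠ 0) :
    bk τ r k 0 * docConv τ r w k + bk τ r k 1 * docConv τ r w (k - 1) = w k := by
  obtain ⟨p, rfl⟩ := Nat.exists_eq_add_of_le' hk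
  have hpast : bk τ r (p + 1) 0 * ∑ j ∈ Icc 1 p, th τ r (p + 1) (p + 1 - j) * w j
      = -(bk τ r (p + 1) 1 * docConv τ r w p) := by
    rw [docConv, mul_sum, mul_sum, ← sum_neg_distrib]
    refine sum_congr rfl fun j hj => ?_
    rw [show p + 1 - j = p - j + 1 by grind, ← mul_assoc, bk_zero_mul_th_succ hb,
      Nat.add_sub_cancel]
    ring
  rw [docConv, sum_Icc_succ_top (by omega), Nat.sub_self, mul_add, hpast, th_zero,
    Nat.add_sub_cancel]
  field_simp
  ring

lemma bk_zero_pos {k : ℕ} (hτ : 0 < τ k) (hr : 0 ≤ r k) : 0 < bk τ r k 0 := by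
  rw [bk_zero]; positivity

lemma bk_one_nonpos {k : ℕ} (hτ : 0 < τ k) (hr : 0 ≤ r k) : bk τ r k 1 ≤ 0 := by
  rw [bk_one, neg_div]; exact neg_nonpos.2 (by positivity)

lemma two_mul_bk_zero_add_bk_one_add_bk_one_succ_pos {k : ℕ} (hτ : 0 < τ k)
    (hr_succ : r (k + 1) = τ (k + 1) / τ k) (hs0 : 0 ≤ r k) (hs : r k < (3 + √17) / 2)
    (ht0 : 0 < r (k + 1)) (ht : r (k + 1) < (3 + √17) / 2) :
    0 < 2 * bk τ r k 0 + bk τ r k 1 + bk τ r (k + 1) 1 := by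
  have hτ_succ : τ (k + 1) = r (k + 1) * τ k := by rw [hr_succ]; field_simp
  have : 2 * bk τ r k 0 + bk τ r k 1 + bk τ r (k + 1) 1
      = ((2 + 4 * r k - r k ^ 2) * (1 + r (k + 1)) - r (k + 1) * (1 + r k))
        / (τ k * (1 + r k) * (1 + r (k + 1))) := by
    rw [bk_zero, bk_one, bk_one, hτ_succ]
    field_simp
    ring
  rw [this]
  exact div_pos (sub_pos.2 (mul_one_add_lt_of_lt_three_add_sqrt_seventeen_div_two hs0 hs ht0.le ht))
    (by positivity)

lemma sum_mul_docConv_pos (w : ℕ → ℝ) (n : ℕ) (hb₀ : ∀ k ∈ Icc 1 n, bk τ r k 0 ≠ 0)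
    (hb₁ : ∀ k ∈ Icc 1 (n + 1), bk τ r k 1 ≤ 0)
    (hD : ∀ k ∈ Icc 1 n, 0 < 2 * bk τ r k 0 + bk τ r k 1 + bk τ r (k + 1) 1)
    (hw : ∃ k ∈ Icc 1 n, w k ≠ 0) :
    0 < ∑ k ∈ Icc 1 n, w k * docConv τ r w k := by
  have hw_eq : ∀ k ∈ Icc 1 n,
      w k = bk τ r k 0 * docConv τ r w k + bk τ r k 1 * docConv τ r w (k - 1) :=
    fun k hk => (bk_mul_docConv_add w (mem_Icc.1 hk).1 (hb₀ k hk)).symm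
  have hv : ∃ k ∈ Icc 1 n, docConv τ r w k ≠ 0 := by
    by_contra! h
    obtain ⟨k, hk, hwk⟩ := hw
    have hprev : docConv τ r w (k - 1) = 0 := by
      rcases (mem_Icc.1 hk).1.eq_or_lt with rfl | hk1
      · exact docConv_zero w
      · exact h (k - 1) (by grind)
    exact hwk (by rw [hw_eq k hk, h k hk, hprev]; ring)
  refine (bidiagonal_form_pos _ _ _ n hb₁ hD (docConv_zero w) hv).trans_eq ?_
  exact sum_congr rfl fun k hk => by rw [← hw_eq k hk, mul_comm]

end Kernels

theorem stmt6_general (N : ℕ) (τ r : ℕ → ℝ)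
    (hτ : ∀ k, 1 ≤ k → k ≤ N → 0 < τ k)
    (hr1 : r 1 = 0)
    (hr : ∀ k, 2 ≤ k → k ≤ N → r k = τ k / τ (k - 1))
    (hratio : ∀ k, 2 ≤ k → k ≤ N → 0 < r k ∧ r k < (3 + Real.sqrt 17) / 2)
    (n : ℕ) (hnN : n + 1 ≤ N)
    (w : ℕ → ℝ) (hw : ∃ k ∈ Finset.Icc 1 n, w k ≠ 0) :
    0 < ∑ k ∈ Finset.Icc 1 n, w k * ∑ j ∈ Finset.Icc 1 k, th τ r k (k - j) * w j := by
  have hr_bound : ∀ k, 1 ≤ k → k ≤ N → 0 ≤ r k ∧ r k < (3 + √17) / 2 := by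
    intro k hk hkN
    rcases hk.eq_or_lt with rfl | hk
    · rw [hr1]; exact ⟨le_rfl, by positivity⟩
    · exact (hratio k hk hkN).imp le_of_lt id
  refine sum_mul_docConv_pos w n (fun k hk => ?_) (fun k hk => ?_) (fun k hk => ?_) hw <;>
    obtain ⟨hk1, hkn⟩ := mem_Icc.1 hk
  · exact (bk_zero_pos (hτ k hk1 (by omega)) (hr_bound k hk1 (by omega)).1).ne'
  · exact bk_one_nonpos (hτ k hk1 (by omega)) (hr_bound k hk1 (by omega)).1
  · obtain ⟨hs0, hs⟩ := hr_bound k hk1 (by omega)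
    obtain ⟨ht0, ht⟩ := hratio (k + 1) (by omega) (by omega)
    exact two_mul_bk_zero_add_bk_one_add_bk_one_succ_pos (hτ k hk1 (by omega))
      (hr (k + 1) (by omega) (by omega)) hs0 hs ht0 ht

theorem stmt6 (N : ℕ) (τ r : ℕ → ℝ)
    (hτ : ∀ k, 1 ≤ k → k ≤ N → 0 < τ k)
    (hr1 : r 1 = 0)
    (hr : ∀ k, 2 ≤ k → k ≤ N → r k = τ k / τ (k - 1))
    (hratio : ∀ k, 2 ≤ k → k ≤ N → 0 < r k ∧ r k < (3 + Real.sqrt 17) / 2)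
    (n : ℕ) (hn2 : 2 ≤ n) (hnN : n + 1 ≤ N)
    (w : ℕ → ℝ) (hw : ∃ k ∈ Finset.Icc 1 n, w k ≠ 0) :
    0 < ∑ k ∈ Finset.Icc 1 n, w k * ∑ j ∈ Finset.Icc 1 k, th τ r k (k - j) * w j :=
  stmt6_general N τ r hτ hr1 hr hratio n hnN w hw
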